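/- (Hoffman–Wielandt inequality.) Let $A$ and $A+E$ be real symmetric $m\times m$ matrices with eigenvalues $\lambda_1(A)\ge\cdots\ge\lambda_m(A)$ and $\lambda_1(A+E)\ge\cdots\ge\lambda_m(A+E)$, listed with multiplicity in decreasing order. Then $\sum_{i=1}^m(\lambda_i(A+E)-\lambda_i(A))^2\le\|E\|_F^2$. -/

import Mathlib

/-!
Let `B = A + E` and diagonalize `A = U D_A Uᵀ`, `B = V D_B Vᵀ`. Then
`‖E‖_F² = tr B² - 2 tr (B A) + tr A²`, where `tr A² = ∑ λᵢ(A)²`, `tr B² = ∑ λᵢ(B)²` and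
`tr (B A) = ∑ᵢⱼ Sᵢⱼ λᵢ(B) λⱼ(A)` with `Sᵢⱼ = ((Vᵀ U)ᵢⱼ)²`. Orthogonality of `Vᵀ U` makes `S`
doubly stochastic; by Birkhoff's theorem it is a convex combination of permutation matrices, and
by the rearrangement inequality every permutation pairs the spectra at most as well as listing
both in decreasing order. Hence `tr (B A) ≤ ∑ λᵢ(B) λᵢ(A)`, which is the claim.
-/

open Matrix Finset

theorem Matrix.sum_sum_sq_eq_trace_mul_transpose {m n : Type*} [Fintype m] [Fintype n]
    (E : Matrix m n ℝ) : ∑ i, ∑ j, E i j ^ 2 = trace (E * Eᵀ) := by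
  simp only [trace, diag_apply, mul_apply, transpose_apply, sq]

section DoublyStochastic

variable {n R : Type*} [Fintype n] [DecidableEq n] [Field R] [LinearOrder R] [IsStrictOrderedRing R]

theorem Monovary.dotProduct_mulVec_le_of_mem_doublyStochastic {f g : n → R} (hfg : Monovary f g)
    {S : Matrix n n R} (hS : S ∈ doublyStochastic R n) : f ⬝ᵥ S *ᵥ g ≤ f ⬝ᵥ g := by
  obtain ⟨w, hw_nonneg, hw_sum, rfl⟩ := exists_eq_sum_perm_of_mem_doublyStochastic hS
  calc f ⬝ᵥ (∑ σ, w σ • σ.permMatrix R) *ᵥ g = ∑ σ, w σ * (f ⬝ᵥ g ∘ σ) := by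
        simp only [sum_mulVec, dotProduct_sum, smul_mulVec, dotProduct_smul, permMatrix_mulVec,
          smul_eq_mul]
    _ ≤ ∑ σ, w σ * (f ⬝ᵥ g) :=
        sum_le_sum fun σ _ =>
          mul_le_mul_of_nonneg_left hfg.sum_mul_comp_perm_le_sum_mul (hw_nonneg σ)
    _ = f ⬝ᵥ g := by rw [← sum_mul, hw_sum, one_mul]

end DoublyStochastic

section OrthogonalGroup

variable {n : Type*} [Fintype n] [DecidableEq n]

theorem Matrix.map_sq_mem_doublyStochastic_of_mem_orthogonalGroup {U : Matrix n n ℝ}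
    (hU : U ∈ orthogonalGroup n ℝ) : U.map (· ^ 2) ∈ doublyStochastic ℝ n := by
  have hrow := (mem_orthogonalGroup_iff n ℝ).mp hU
  have hcol := (mem_orthogonalGroup_iff' n ℝ).mp hU
  refine mem_doublyStochastic_iff_sum.mpr ⟨fun i j => sq_nonneg _, fun i => ?_, fun j => ?_⟩
  · simpa [mul_apply, sq] using congr_fun (congr_fun hrow i) i
  · simpa [mul_apply, sq] using congr_fun (congr_fun hcol j) j

theorem Matrix.trace_diagonal_mul_mul_diagonal_mul_transpose (d e : n → ℝ) (W : Matrix n n ℝ) :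
    trace (diagonal d * W * diagonal e * Wᵀ) = d ⬝ᵥ W.map (· ^ 2) *ᵥ e := by
  simp only [trace, diag_apply, mul_apply, diagonal_apply, ite_mul, mul_ite, zero_mul, mul_zero,
    sum_ite_eq, sum_ite_eq', mem_univ, if_true, transpose_apply, dotProduct, mulVec, map_apply,
    mul_sum]
  refine sum_congr rfl fun i _ => sum_congr rfl fun j _ => ?_
  ring

end OrthogonalGroup

namespace Matrix.IsHermitian

variable {n : Type*} [Fintype n] [DecidableEq n] {A B : Matrix n n ℝ}

theorem eq_eigenvectorUnitary_mul_diagonal_mul_transpose (hA : A.IsHermitian) :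
    A = (hA.eigenvectorUnitary : Matrix n n ℝ) * diagonal hA.eigenvalues *
      (hA.eigenvectorUnitary : Matrix n n ℝ)ᵀ := by
  conv_lhs => rw [hA.spectral_theorem]
  simp [star_eq_conjTranspose]

theorem trace_mul_eq_dotProduct (hA : A.IsHermitian) (hB : B.IsHermitian) :
    trace (A * B) = hA.eigenvalues ⬝ᵥ
      ((hA.eigenvectorUnitary : Matrix n n ℝ)ᵀ * hB.eigenvectorUnitary).map (· ^ 2) *ᵥ
        hB.eigenvalues := by
  set U : Matrix n n ℝ := ↑hA.eigenvectorUnitary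
  set V : Matrix n n ℝ := ↑hB.eigenvectorUnitary
  calc trace (A * B)
      = trace (U * (diagonal hA.eigenvalues * Uᵀ * V * diagonal hB.eigenvalues * Vᵀ)) := by
        have hA' : A = U * diagonal hA.eigenvalues * Uᵀ :=
          hA.eq_eigenvectorUnitary_mul_diagonal_mul_transpose
        have hB' : B = V * diagonal hB.eigenvalues * Vᵀ :=
          hB.eq_eigenvectorUnitary_mul_diagonal_mul_transpose
        conv_lhs => rw [hA', hB']
        simp only [Matrix.mul_assoc]
    _ = trace (diagonal hA.eigenvalues * (Uᵀ * V) * diagonal hB.eigenvalues * (Uᵀ * V)ᵀ) := by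
        rw [trace_mul_comm]
        simp only [transpose_mul, transpose_transpose, Matrix.mul_assoc]
    _ = _ := trace_diagonal_mul_mul_diagonal_mul_transpose _ _ _

theorem trace_mul_self_eq_dotProduct (hA : A.IsHermitian) :
    trace (A * A) = hA.eigenvalues ⬝ᵥ hA.eigenvalues := by
  have hU : (hA.eigenvectorUnitary : Matrix n n ℝ)ᵀ * hA.eigenvectorUnitary = 1 :=
    (mem_orthogonalGroup_iff' n ℝ).mp hA.eigenvectorUnitary.2
  rw [hA.trace_mul_eq_dotProduct hA, hU, Matrix.map_one (· ^ 2) (zero_pow two_ne_zero) (one_pow 2),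
    one_mulVec]

theorem trace_mul_le_dotProduct (hA : A.IsHermitian) (hB : B.IsHermitian) {σ τ : Equiv.Perm n}
    (h : Monovary (hA.eigenvalues ∘ σ) (hB.eigenvalues ∘ τ)) :
    trace (A * B) ≤ hA.eigenvalues ∘ σ ⬝ᵥ hB.eigenvalues ∘ τ := by
  set W : Matrix n n ℝ := (hA.eigenvectorUnitary : Matrix n n ℝ)ᵀ * hB.eigenvectorUnitary
  have hW : W ∈ orthogonalGroup n ℝ :=
    mul_mem (Unitary.star_mem hA.eigenvectorUnitary.2) hB.eigenvectorUnitary.2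
  have hS : (W.map (· ^ 2)).submatrix σ τ ∈ doublyStochastic ℝ n :=
    reindex_mem_doublyStochastic (e₁ := σ.symm) (e₂ := τ.symm)
      (map_sq_mem_doublyStochastic_of_mem_orthogonalGroup hW)
  calc trace (A * B)
      = hA.eigenvalues ∘ σ ⬝ᵥ (W.map (· ^ 2)).submatrix σ τ *ᵥ hB.eigenvalues ∘ τ := by
        rw [hA.trace_mul_eq_dotProduct hB, submatrix_mulVec_equiv, Function.comp_assoc,
          Equiv.self_comp_symm, Function.comp_id, comp_equiv_dotProduct_comp_equiv]
    _ ≤ _ := h.dotProduct_mulVec_le_of_mem_doublyStochastic hS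

end Matrix.IsHermitian

/-- Hoffman–Wielandt inequality: if `μA` and `μAE` list the eigenvalues (with
multiplicity) of the real symmetric matrices `A` and `A + E` in decreasing order,
then `∑ i (μAE i - μA i)² ≤ ‖E‖_F²`. -/
theorem stmt_9 (m : ℕ) (A E : Matrix (Fin m) (Fin m) ℝ)
    (hA : A.IsHermitian) (hAE : (A + E).IsHermitian)
    (μA μAE : Fin m → ℝ) (hμA : Antitone μA) (hμAE : Antitone μAE)
    (gA gAE : Equiv.Perm (Fin m))
    (hA2 : μA = hA.eigenvalues ∘ gA) (hAE2 : μAE = hAE.eigenvalues ∘ gAE) :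
    ∑ i, (μAE i - μA i) ^ 2 ≤ ∑ i, ∑ j, E i j ^ 2 := by
  have hE : Eᵀ = E := by simpa [IsHermitian] using hAE.sub hA
  have hcross : trace ((A + E) * A) ≤ μAE ⬝ᵥ μA := by
    subst hA2 hAE2
    exact hAE.trace_mul_le_dotProduct hA (hμAE.monovary hμA)
  have hAA : trace (A * A) = μA ⬝ᵥ μA := by
    rw [hA2, comp_equiv_dotProduct_comp_equiv, hA.trace_mul_self_eq_dotProduct]
  have hBB : trace ((A + E) * (A + E)) = μAE ⬝ᵥ μAE := by
    rw [hAE2, comp_equiv_dotProduct_comp_equiv, hAE.trace_mul_self_eq_dotProduct]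
  calc ∑ i, (μAE i - μA i) ^ 2 = μAE ⬝ᵥ μAE - 2 * μAE ⬝ᵥ μA + μA ⬝ᵥ μA := by
        simp only [dotProduct, mul_sum, ← sum_sub_distrib, ← sum_add_distrib]
        exact sum_congr rfl fun i _ => by ring
    _ ≤ trace ((A + E) * (A + E)) - 2 * trace ((A + E) * A) + trace (A * A) := by
        rw [hAA, hBB]; linarith
    _ = ∑ i, ∑ j, E i j ^ 2 := by
        rw [sum_sum_sq_eq_trace_mul_transpose, hE]
        simp only [add_mul, mul_add, trace_add, trace_mul_comm A E]
        ring
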